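/- For any finite-dimensional Lie algebra 𝔤 over a field of characteristic zero, the span of adjoint actions 𝔤·U(𝔤) = {gω − ωg : g ∈ 𝔤, ω ∈ U(𝔤)} (linear span) equals the span of all commutators [U(𝔤), U(𝔤)] = span{ab − ba : a, b ∈ U(𝔤)}. -/

import Mathlib

/-! The set of `a` such that `a * b - b * a` lies in the span of the `x * ω - ω * x` (`x ∈ 𝔤`) for
every `b` is closed under products, by `xy·b - b·xy = (x·yb - yb·x) + (y·bx - bx·y)`, and under
sums and scalars. It contains `𝔤`, which generates `U(𝔤)` as an algebra, so it is everything. -/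

theorem UniversalEnvelopingAlgebra.adjoin_range_ι (R L : Type*) [CommRing R] [LieRing L]
    [LieAlgebra R L] : Algebra.adjoin R (Set.range (ι R (L := L))) = ⊤ := by
  have hι : Set.range (ι R (L := L)) = mkAlgHom R L '' Set.range (TensorAlgebra.ι R) := by
    rw [← Set.range_comp]; rfl
  rw [hι, ← AlgHom.map_adjoin, TensorAlgebra.adjoin_range_ι, Algebra.map_top,
    AlgHom.range_eq_top]
  exact RingCon.mkₐ_surjective _

theorem Algebra.span_commutators_eq_of_adjoin_range_eq_top {R A ι : Type*} [CommSemiring R]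
    [Ring A] [Algebra R A] {f : ι → A} (hf : Algebra.adjoin R (Set.range f) = ⊤) :
    Submodule.span R {c : A | ∃ (i : ι) (ω : A), f i * ω - ω * f i = c}
      = Submodule.span R {c : A | ∃ a b : A, a * b - b * a = c} := by
  set S := Submodule.span R {c : A | ∃ (i : ι) (ω : A), f i * ω - ω * f i = c}
  refine le_antisymm (Submodule.span_mono fun c ⟨i, ω, hc⟩ ↦ ⟨f i, ω, hc⟩) ?_
  rw [Submodule.span_le]
  rintro _ ⟨a, b, rfl⟩
  have ha : a ∈ Algebra.adjoin R (Set.range f) := hf ▸ Algebra.mem_top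
  induction ha using Algebra.adjoin_induction generalizing b with
  | mem x hx =>
    obtain ⟨i, rfl⟩ := hx
    exact Submodule.subset_span ⟨i, b, rfl⟩
  | algebraMap r =>
    simp [Algebra.commutes]
  | add x y _ _ hx hy =>
    rw [add_mul, mul_add, add_sub_add_comm]
    exact S.add_mem (hx b) (hy b)
  | mul x y _ _ hx hy =>
    have hsplit : x * y * b - b * (x * y)
        = (x * (y * b) - y * b * x) + (y * (b * x) - b * x * y) := by noncomm_ring
    rw [hsplit]
    exact S.add_mem (hx (y * b)) (hy (b * x))

theorem g_action_span_eq_commutator_span_general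
    {k : Type} [Field k]
    {𝔤 : Type} [LieRing 𝔤] [LieAlgebra k 𝔤] :
    Submodule.span k {c : UniversalEnvelopingAlgebra k 𝔤 |
        ∃ (x : 𝔤) (ω : UniversalEnvelopingAlgebra k 𝔤),
          UniversalEnvelopingAlgebra.ι k x * ω - ω * UniversalEnvelopingAlgebra.ι k x = c}
      = Submodule.span k {c : UniversalEnvelopingAlgebra k 𝔤 |
          ∃ a e : UniversalEnvelopingAlgebra k 𝔤, a * e - e * a = c} :=
  Algebra.span_commutators_eq_of_adjoin_range_eq_top
    (UniversalEnvelopingAlgebra.adjoin_range_ι k 𝔤)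

/-- For any finite-dimensional Lie algebra `𝔤` over a field of characteristic
zero, the linear span `𝔤·U(𝔤)` of the elements `gω − ωg` (`g ∈ 𝔤 ⊂ U(𝔤)`, `ω ∈ U(𝔤)`)
equals the linear span `[U(𝔤), U(𝔤)]` of all commutators `ab − ba` (`a, b ∈ U(𝔤)`). -/
theorem g_action_span_eq_commutator_span
    {k : Type} [Field k] [CharZero k]
    {𝔤 : Type} [LieRing 𝔤] [LieAlgebra k 𝔤] [FiniteDimensional k 𝔤] :
    Submodule.span k {c : UniversalEnvelopingAlgebra k 𝔤 |
        ∃ (x : 𝔤) (ω : UniversalEnvelopingAlgebra k 𝔤),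
          UniversalEnvelopingAlgebra.ι k x * ω - ω * UniversalEnvelopingAlgebra.ι k x = c}
      = Submodule.span k {c : UniversalEnvelopingAlgebra k 𝔤 |
          ∃ a e : UniversalEnvelopingAlgebra k 𝔤, a * e - e * a = c} :=
  g_action_span_eq_commutator_span_general
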